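/- arXiv:2104.06636 — 2 statements merged into one kernel-verified Lean document; each statement's English description precedes it below -/
import Mathlib

section
/- Let H = (V, ℰ) be a β-acyclic hypergraph, let T be a join tree for H, and let S be the family of separators of H with respect to T. Then for any three separators S_1, S_2, S_3 ∈ S, there exists a separator S ∈ S such that (S_1 ∩ S_2) ∪ (S_2 ∩ S_3) ∪ (S_1 ∩ S_3) ⊆ S; consequently, every subfamily of S forms a conformal hypergraph. -/
open SimpleGraph

/-- `T` is a join tree for the hypergraph whose hyperedge family is `E` (indexed by `ι`):
`T` is a tree on the hyperedges and, for every vertex `v`, the hyperedges containing `v`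
induce a connected (nonempty sets being preconnected) subgraph of `T`. -/
def IsJoinTree {V ι : Type*} (E : ι → Finset V) (T : SimpleGraph ι) : Prop :=
  T.IsTree ∧ ∀ v : V, (T.induce {i | v ∈ E i}).Preconnected

/-- A hypergraph is acyclic if it admits a join tree. -/
def IsAcyclicHG {V ι : Type*} (E : ι → Finset V) : Prop :=
  ∃ T : SimpleGraph ι, IsJoinTree E T
/-- A hypergraph is β-acyclic if every (nonempty) subfamily of its hyperedges forms an
acyclic hypergraph. -/
def BetaAcyclic {V ι : Type*} (E : ι → Finset V) : Prop :=
  ∀ s : Set ι, s.Nonempty → IsAcyclicHG fun i : s => E i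
/-- The separator associated to an edge `{a, b}` of a join tree: `E a ∩ E b`. -/
def sepOf {V ι : Type*} [DecidableEq V] (E : ι → Finset V) : Sym2 ι → Finset V :=
  Sym2.lift ⟨fun a b => E a ∩ E b, fun a b => Finset.inter_comm _ _⟩
/-- The 2-section graph of a hypergraph: two distinct vertices are adjacent iff some
hyperedge contains both. -/
def twoSection {V ι : Type*} (E : ι → Finset V) : SimpleGraph V where
  Adj u v := u ≠ v ∧ ∃ i, u ∈ E i ∧ v ∈ E i
  symm := by
    refine ⟨?_⟩
    rintro u v ⟨h, i, hu, hv⟩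
    exact ⟨h.symm, i, hv, hu⟩
  loopless := ⟨fun u h => h.1 rfl⟩
/-- A hypergraph is conformal if every maximal clique of its 2-section graph (on the
vertex set of the hypergraph, i.e. the union of its hyperedges) is contained in some
hyperedge. -/
def ConformalHG {V ι : Type*} (E : ι → Finset V) : Prop :=
  ∀ K : Finset V, K.Nonempty → ↑K ⊆ ⋃ i, (E i : Set V) →
    (twoSection E).IsClique (K : Set V) →
    (∀ K' : Finset V, ↑K' ⊆ ⋃ i, (E i : Set V) →
      (twoSection E).IsClique (K' : Set V) → K ⊆ K' → K' = K) →
    ∃ i, K ⊆ E i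

/-!
A β-acyclic hypergraph has no special triangle: in a join tree of three hyperedges, a vertex
lying in exactly two of them forces those two to be adjacent, so a special triangle would put a
triangle into the tree. Absence of special triangles (of any three sets, the intersection of two
lies in the third) passes from the hyperedges to their pairwise intersections, hence to the
separators; for three separators it puts the union of their pairwise intersections inside one
of the three. Conformality of every subfamily then follows from Gilmore's criterion.
-/

namespace SimpleGraph

variable {α : Type*} {G : SimpleGraph α}

lemma adj_of_preconnected_induce_pair {u v : α} (h : (G.induce {u, v}).Preconnected)
    (huv : u ≠ v) : G.Adj u v := by
  obtain ⟨p⟩ := h ⟨u, by simp⟩ ⟨v, by simp⟩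
  cases p with
  | nil => exact absurd rfl huv
  | @cons _ t _ hadj _ =>
    have ht : t.1 = v := (t.2 : t.1 = u ∨ t.1 = v).resolve_left (G.ne_of_adj hadj).symm
    exact ht ▸ hadj

lemma IsAcyclic.not_adj_triangle (hG : G.IsAcyclic) {a b c : α} (hab : G.Adj a b)
    (hbc : G.Adj b c) (hca : G.Adj c a) : False :=
  hG (.cons hab (.cons hbc (.cons hca .nil))) <| by
    simp [Walk.cons_isCycle_iff, hab.ne, hbc.ne, hca.ne, hab.ne.symm, hca.ne.symm]

end SimpleGraph

open Finset

section SpecialTriangle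

variable {V κ κ' : Type*} [DecidableEq V]

/-- A special triangle (β-cycle of length three) consists of three hyperedges and three vertices,
each vertex lying in exactly two of the hyperedges, a different pair for each. -/
def NoSpecialTriangle (F : κ → Finset V) : Prop :=
  ∀ j₁ j₂ j₃, F j₂ ∩ F j₃ ⊆ F j₁ ∨ F j₁ ∩ F j₃ ⊆ F j₂ ∨ F j₁ ∩ F j₂ ⊆ F j₃

lemma IsAcyclicHG.inter_subset_of_forall_eq_or {E : κ → Finset V} (hE : IsAcyclicHG E)
    {a b c : κ} (hall : ∀ j, j = a ∨ j = b ∨ j = c) :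
    E b ∩ E c ⊆ E a ∨ E a ∩ E c ⊆ E b ∨ E a ∩ E b ⊆ E c := by
  obtain ⟨T, hT, hconn⟩ := hE
  by_contra! h
  obtain ⟨⟨x, hx, hxa⟩, ⟨y, hy, hyb⟩, ⟨z, hz, hzc⟩⟩ :=
    And.imp not_subset.mp (And.imp not_subset.mp not_subset.mp) h
  rw [mem_inter] at hx hy hz
  have hab : a ≠ b := by rintro rfl; exact hyb hy.1
  have hbc : b ≠ c := by rintro rfl; exact hzc hz.2
  have hca : c ≠ a := by rintro rfl; exact hxa hx.2
  have adj_of_mem_iff {w : V} {i j : κ} (hij : i ≠ j) (hw : ∀ k, w ∈ E k ↔ k = i ∨ k = j) :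
      T.Adj i j := by
    have hset : {k | w ∈ E k} = {i, j} := Set.ext hw
    exact SimpleGraph.adj_of_preconnected_induce_pair (hset ▸ hconn w) hij
  refine hT.isAcyclic.not_adj_triangle (adj_of_mem_iff hab (w := z) ?_)
    (adj_of_mem_iff hbc (w := x) ?_) (adj_of_mem_iff hca (w := y) ?_) <;>
  · intro k
    rcases hall k with rfl | rfl | rfl <;> simp_all [Ne.symm]

lemma BetaAcyclic.noSpecialTriangle {E : κ → Finset V} (hE : BetaAcyclic E) :
    NoSpecialTriangle E := by
  intro i₁ i₂ i₃
  exact (hE {i₁, i₂, i₃} ⟨i₁, by simp⟩).inter_subset_of_forall_eq_or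
    (a := ⟨i₁, by simp⟩) (b := ⟨i₂, by simp⟩) (c := ⟨i₃, by simp⟩)
    fun j => by simpa only [Subtype.ext_iff, Set.mem_insert_iff, Set.mem_singleton_iff] using j.2

lemma NoSpecialTriangle.comp {F : κ → Finset V} (hF : NoSpecialTriangle F) (f : κ' → κ) :
    NoSpecialTriangle (F ∘ f) :=
  fun _ _ _ => hF _ _ _

lemma NoSpecialTriangle.sepOf {E : κ → Finset V} (hE : NoSpecialTriangle E) :
    NoSpecialTriangle (sepOf E) := by
  intro e₁ e₂ e₃
  induction e₁ using Sym2.ind with | _ a₁ b₁ =>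
  induction e₂ using Sym2.ind with | _ a₂ b₂ =>
  induction e₃ using Sym2.ind with | _ a₃ b₃ =>
  simp only [_root_.sepOf, Sym2.lift_mk]
  by_contra! h
  obtain ⟨⟨x, hx, hx₁⟩, ⟨y, hy, hy₂⟩, ⟨z, hz, hz₃⟩⟩ :=
    And.imp not_subset.mp (And.imp not_subset.mp not_subset.mp) h
  simp only [mem_inter, not_and_or] at hx hy hz hx₁ hy₂ hz₃
  have pick {a b : κ} {u v w : V} (hu : u ∉ E a ∨ u ∉ E b) (hv : v ∈ E a ∧ v ∈ E b)
      (hw : w ∈ E a ∧ w ∈ E b) : ∃ i, u ∉ E i ∧ v ∈ E i ∧ w ∈ E i := by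
    rcases hu with hu | hu
    exacts [⟨a, hu, hv.1, hw.1⟩, ⟨b, hu, hv.2, hw.2⟩]
  obtain ⟨i₁, hxi₁, hyi₁, hzi₁⟩ := pick hx₁ hy.1 hz.1
  obtain ⟨i₂, hyi₂, hxi₂, hzi₂⟩ := pick hy₂ hx.1 hz.2
  obtain ⟨i₃, hzi₃, hxi₃, hyi₃⟩ := pick hz₃ hx.2 hy.2
  rcases hE i₁ i₂ i₃ with h | h | h
  · exact hxi₁ (h (mem_inter.mpr ⟨hxi₂, hxi₃⟩))
  · exact hyi₂ (h (mem_inter.mpr ⟨hyi₁, hyi₃⟩))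
  · exact hzi₃ (h (mem_inter.mpr ⟨hzi₁, hzi₂⟩))

lemma NoSpecialTriangle.exists_union_inter_subset {F : κ → Finset V} (hF : NoSpecialTriangle F)
    (j₁ j₂ j₃ : κ) : ∃ j ∈ ({j₁, j₂, j₃} : Set κ),
      (F j₁ ∩ F j₂) ∪ (F j₂ ∩ F j₃) ∪ (F j₁ ∩ F j₃) ⊆ F j := by
  rcases hF j₁ j₂ j₃ with h | h | h
  · exact ⟨j₁, by simp, union_subset (union_subset inter_subset_left h) inter_subset_left⟩
  · exact ⟨j₂, by simp, union_subset (union_subset inter_subset_right inter_subset_left) h⟩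
  · exact ⟨j₃, by simp, union_subset (union_subset h inter_subset_right) inter_subset_right⟩

end SpecialTriangle

section Conformal

variable {V κ : Type*} [DecidableEq V]

/-- The "if" direction of Gilmore's theorem. -/
lemma exists_subset_of_forall_pair_mem {F : κ → Finset V}
    (hF : ∀ j₁ j₂ j₃, ∃ j, (F j₁ ∩ F j₂) ∪ (F j₂ ∩ F j₃) ∪ (F j₁ ∩ F j₃) ⊆ F j)
    {K : Finset V} (hK : K.Nonempty) (hpair : ∀ u ∈ K, ∀ v ∈ K, ∃ j, u ∈ F j ∧ v ∈ F j) :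
    ∃ j, K ⊆ F j := by
  induction K using Finset.strongInduction with | H K ih =>
  by_cases hcard : 2 < #K
  · obtain ⟨a, b, c, ha, hb, hc, hab, hac, hbc⟩ := two_lt_card_iff.mp hcard
    -- each `K.erase d` is covered by induction; a point of `K` is missed by at most one of them
    have erase_subset {d} (hd : d ∈ K) {e} (he : e ∈ K) (hed : e ≠ d) : ∃ j, K.erase d ⊆ F j :=
      ih _ (erase_ssubset hd) ⟨e, mem_erase.mpr ⟨hed, he⟩⟩
        fun u hu v hv => hpair u (mem_of_mem_erase hu) v (mem_of_mem_erase hv)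
    obtain ⟨j₁, hj₁⟩ := erase_subset ha hb hab.symm
    obtain ⟨j₂, hj₂⟩ := erase_subset hb ha hab
    obtain ⟨j₃, hj₃⟩ := erase_subset hc ha hac
    obtain ⟨j, hj⟩ := hF j₁ j₂ j₃
    refine ⟨j, fun w hw => hj ?_⟩
    have mem {d j'} (h : K.erase d ⊆ F j') (hwd : w ≠ d) : w ∈ F j' := h (mem_erase.mpr ⟨hwd, hw⟩)
    simp only [mem_union, mem_inter]
    by_cases hwa : w = a
    · subst hwa
      exact Or.inl (Or.inr ⟨mem hj₂ hab, mem hj₃ hac⟩)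
    by_cases hwb : w = b
    · subst hwb
      exact Or.inr ⟨mem hj₁ hwa, mem hj₃ hbc⟩
    · exact Or.inl (Or.inl ⟨mem hj₁ hwa, mem hj₂ hwb⟩)
  · obtain ⟨u, hu, v, hv, hKuv⟩ : ∃ u ∈ K, ∃ v ∈ K, K ⊆ {u, v} := by
      obtain h | h : #K = 1 ∨ #K = 2 := by have := hK.card_pos; omega
      · obtain ⟨u, rfl⟩ := card_eq_one.mp h
        exact ⟨u, by simp, u, by simp, by simp⟩
      · obtain ⟨u, v, -, rfl⟩ := card_eq_two.mp h
        exact ⟨u, by simp, v, by simp, subset_rfl⟩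
    obtain ⟨j, huj, hvj⟩ := hpair u hu v hv
    exact ⟨j, hKuv.trans (insert_subset huj (singleton_subset_iff.mpr hvj))⟩

lemma conformalHG_of_forall_exists_union_inter_subset {F : κ → Finset V}
    (hF : ∀ j₁ j₂ j₃, ∃ j, (F j₁ ∩ F j₂) ∪ (F j₂ ∩ F j₃) ∪ (F j₁ ∩ F j₃) ⊆ F j) :
    ConformalHG F := by
  intro K hK hcover hclique _
  refine exists_subset_of_forall_pair_mem hF hK fun u hu v hv => ?_
  by_cases huv : u = v
  · subst huv
    obtain ⟨j, hj⟩ := Set.mem_iUnion.mp (hcover hu)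
    exact ⟨j, hj, hj⟩
  · exact (hclique hu hv huv).2

end Conformal

theorem stmt11_general {V ι : Type*} [DecidableEq V]
    (E : ι → Finset V)
    (hbeta : BetaAcyclic E)
    (T : SimpleGraph ι) :
    (∀ e₁ e₂ e₃ : Sym2 ι, e₁ ∈ T.edgeSet → e₂ ∈ T.edgeSet → e₃ ∈ T.edgeSet →
      ∃ e ∈ T.edgeSet,
        (sepOf E e₁ ∩ sepOf E e₂) ∪ (sepOf E e₂ ∩ sepOf E e₃) ∪ (sepOf E e₁ ∩ sepOf E e₃)
          ⊆ sepOf E e) ∧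
      ∀ s : Set (Sym2 ι), s ⊆ T.edgeSet →
        ConformalHG fun e : s => sepOf E (e : Sym2 ι) := by
  have hsep : NoSpecialTriangle (sepOf E) := hbeta.noSpecialTriangle.sepOf
  refine ⟨fun e₁ e₂ e₃ h₁ h₂ h₃ => ?_, fun s _ => ?_⟩
  · obtain ⟨e, he, hsub⟩ := hsep.exists_union_inter_subset e₁ e₂ e₃
    refine ⟨e, ?_, hsub⟩
    rcases he with rfl | rfl | rfl <;> assumption
  · refine conformalHG_of_forall_exists_union_inter_subset fun j₁ j₂ j₃ => ?_
    obtain ⟨j, -, hj⟩ := (hsep.comp Subtype.val).exists_union_inter_subset j₁ j₂ j₃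
    exact ⟨j, hj⟩

/-- If `H` is β-acyclic, `T` is a join tree for `H`, and `S` is the
family of separators of `H` with respect to `T`, then for any three separators
`S₁, S₂, S₃ ∈ S` there is a separator `S ∈ S` with
`(S₁ ∩ S₂) ∪ (S₂ ∩ S₃) ∪ (S₁ ∩ S₃) ⊆ S`; consequently every subfamily of `S` forms a
conformal hypergraph. -/
theorem stmt11 {V ι : Type*} [Fintype V] [Fintype ι] [DecidableEq V]
    (E : ι → Finset V)
    (hne : ∀ i, (E i).Nonempty) (hcov : ∀ v, ∃ i, v ∈ E i)
    (hbeta : BetaAcyclic E)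
    (T : SimpleGraph ι) (hT : IsJoinTree E T) :
    (∀ e₁ e₂ e₃ : Sym2 ι, e₁ ∈ T.edgeSet → e₂ ∈ T.edgeSet → e₃ ∈ T.edgeSet →
      ∃ e ∈ T.edgeSet,
        (sepOf E e₁ ∩ sepOf E e₂) ∪ (sepOf E e₂ ∩ sepOf E e₃) ∪ (sepOf E e₁ ∩ sepOf E e₃)
          ⊆ sepOf E e) ∧
      ∀ s : Set (Sym2 ι), s ⊆ T.edgeSet →
        ConformalHG fun e : s => sepOf E (e : Sym2 ι) :=
  stmt11_general E hbeta T
end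

section
/- Let H = (V, ℰ) be an acyclic hypergraph. Then H is γ-acyclic if and only if the line graph of H is isomorphic (under the identity map on ℰ) to the union join graph of H; that is, if and only if for all distinct hyperedges E_i, E_j of H: E_i ∩ E_j ≠ ∅ holds exactly when some join tree of H contains the edge E_iE_j. -/
open SimpleGraph

/-- A list of vertices forms a path in the hypergraph `E` if each two consecutive
vertices lie in a common hyperedge. -/
def FormsPath {V ι : Type*} (E : ι → Finset V) (p : List V) : Prop :=
  p.Chain' fun a b => ∃ i, a ∈ E i ∧ b ∈ E i

/-- `X` separates `Y` from `Z` in the hypergraph `E`: `X` is nonempty and every sequence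
of vertices forming a path in `E` from a vertex of `Y` to a vertex of `Z` contains a
vertex of `X`. -/
def Separates {V ι : Type*} (E : ι → Finset V) (X Y Z : Finset V) : Prop :=
  X.Nonempty ∧ ∀ p : List V, FormsPath E p →
    (∃ y ∈ Y, p.head? = some y) → (∃ z ∈ Z, p.getLast? = some z) →
    ∃ x ∈ X, x ∈ p
/-- The incidence graph of a hypergraph: the bipartite graph on vertices and hyperedges
where a vertex is adjacent to the hyperedges containing it. -/
def incidenceGraph {V ι : Type*} (E : ι → Finset V) : SimpleGraph (V ⊕ ι) where
  Adj a b :=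
    (∃ v i, a = Sum.inl v ∧ b = Sum.inr i ∧ v ∈ E i) ∨
    (∃ v i, a = Sum.inr i ∧ b = Sum.inl v ∧ v ∈ E i)
  symm := by
    refine ⟨?_⟩
    rintro a b (⟨v, i, rfl, rfl, h⟩ | ⟨v, i, rfl, rfl, h⟩)
    · exact Or.inr ⟨v, i, rfl, rfl, h⟩
    · exact Or.inl ⟨v, i, rfl, rfl, h⟩
  loopless := by
    refine ⟨?_⟩
    rintro a (⟨v, i, rfl, h, -⟩ | ⟨v, i, rfl, h, -⟩) <;> simp at h

/-- A hypergraph is γ-acyclic iff (Fagin's characterization) for all distinct hyperedges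
`E_i, E_j` with `E_i ∩ E_j ≠ ∅`, the set `E_i ∩ E_j` separates `E_i \ E_j` from
`E_j \ E_i`. -/
def GammaAcyclic {V ι : Type*} [DecidableEq V] (E : ι → Finset V) : Prop :=
  ∀ i j : ι, i ≠ j → (E i ∩ E j).Nonempty →
    Separates E (E i ∩ E j) (E i \ E j) (E j \ E i)

/-!
Remove an edge `ij` from a join tree `T`. A vertex outside `E i ∩ E j` lies only in
hyperedges on one side of the cut, so a hypergraph path from `E i` to `E j` must meet
`E i ∩ E j`, and if `E i ∩ E j` were empty the incidence graph would be disconnected.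

Conversely, if `E i ∩ E j ≠ ∅`, this set lies in every hyperedge on the `T`-path
`i p₁ p₂ ⋯ j`. Applied to the pair `(i, p₂)`, γ-acyclicity gives `E i ∩ E p₁ ⊆ E p₂` or
`E p₂ ∩ E p₁ ⊆ E i`. Accordingly, replacing `i p₁` or `p₂ p₁` by `i p₂` yields a join
tree in which the path from `i` to `j` is one edge shorter.
-/

namespace SimpleGraph

variable {V : Type*} {G H : SimpleGraph V}

lemma Preconnected.of_adj_reachable (hG : G.Preconnected)
    (h : ∀ ⦃x y⦄, G.Adj x y → H.Reachable x y) : H.Preconnected := by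
  intro x y
  rw [reachable_eq_reflTransGen] at h ⊢
  exact Relation.reflTransGen_closed (fun a b hab => h hab) _ _
    (reachable_eq_reflTransGen ▸ hG x y)

lemma IsAcyclic.not_reachable_deleteEdges (hG : G.IsAcyclic) {u v : V} (huv : G.Adj u v) :
    ¬(G.deleteEdges {s(u, v)}).Reachable u v :=
  isBridge_iff.mp (isAcyclic_iff_forall_adj_isBridge.mp hG huv)

lemma IsAcyclic.isPath_support_subset {S : Set V} (hG : G.IsAcyclic)
    (hS : (G.induce S).Preconnected) {u v : V} (hu : u ∈ S) (hv : v ∈ S) {p : G.Walk u v}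
    (hp : p.IsPath) : ∀ w ∈ p.support, w ∈ S := by
  classical
  intro w hw
  obtain ⟨q⟩ := hS ⟨u, hu⟩ ⟨v, hv⟩
  set q' := q.map (Embedding.induce S).toHom
  have hpq : p = q'.bypass :=
    congrArg Subtype.val ((hG.subsingleton_path u v).elim ⟨p, hp⟩ ⟨_, q'.bypass_isPath⟩)
  rw [hpq] at hw
  have hwq := q'.support_bypass_subset_support hw
  rw [Walk.support_map] at hwq
  obtain ⟨⟨w', hw'S⟩, -, rfl⟩ := List.mem_map.mp hwq
  exact hw'S

def rewire (T : SimpleGraph V) (a b c : V) : SimpleGraph V :=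
  T.deleteEdges {s(a, b)} ⊔ edge a c

variable {T : SimpleGraph V} {a b c : V}

lemma rewire_adj (hac : a ≠ c) : (T.rewire a b c).Adj a c :=
  Or.inr ((edge_adj ..).mpr ⟨Or.inl ⟨rfl, rfl⟩, hac⟩)

lemma Adj.reachable_induce_rewire {S : Set V} {x y : S} (hxy : T.Adj x y) (hbc : T.Adj b c)
    (hac : a ≠ c) (hS : a ∈ S → b ∈ S → c ∈ S) :
    ((T.rewire a b c).induce S).Reachable x y := by
  by_cases he : s(x.1, y.1) = s(a, b)
  · have hxy_ab : x.1 = a ∧ y.1 = b ∨ x.1 = b ∧ y.1 = a := Sym2.eq_iff.mp he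
    have hcS : c ∈ S := by
      rcases hxy_ab with ⟨hx, hy⟩ | ⟨hx, hy⟩
      · exact hS (hx ▸ x.2) (hy ▸ y.2)
      · exact hS (hy ▸ y.2) (hx ▸ x.2)
    have adj_c : ∀ z : S, z.1 = a ∨ z.1 = b → ((T.rewire a b c).induce S).Adj z ⟨c, hcS⟩ := by
      rintro z (hz | hz) <;> change (T.rewire a b c).Adj z c <;> rw [hz]
      · exact rewire_adj hac
      · refine Or.inl (deleteEdges_adj.mpr ⟨hbc, fun hbc_ab => ?_⟩)
        rcases Sym2.eq_iff.mp hbc_ab with ⟨-, hcb⟩ | ⟨-, hca⟩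
        · exact hbc.ne hcb.symm
        · exact hac hca.symm
    have hx := adj_c x (by tauto)
    have hy := adj_c y (by tauto)
    exact hx.reachable.trans hy.reachable.symm
  · have hxy' : ((T.rewire a b c).induce S).Adj x y := Or.inl (deleteEdges_adj.mpr ⟨hxy, he⟩)
    exact hxy'.reachable

lemma IsTree.rewire (hT : T.IsTree) (hab : T.Adj a b) (hbc : T.Adj b c) (hac : a ≠ c) :
    (T.rewire a b c).IsTree := by
  have hcb : (T.deleteEdges {s(a, b)}).Adj c b := by
    refine deleteEdges_adj.mpr ⟨hbc.symm, fun hcb_ab => ?_⟩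
    rcases Sym2.eq_iff.mp hcb_ab with ⟨hca, -⟩ | ⟨-, hba⟩
    · exact hac hca.symm
    · exact hab.ne hba.symm
  have hac_sep : ¬(T.deleteEdges {s(a, b)}).Reachable a c := fun h =>
    hT.isAcyclic.not_reachable_deleteEdges hab (h.trans hcb.reachable)
  have : Nonempty V := ⟨a⟩
  refine ⟨⟨hT.connected.preconnected.of_adj_reachable fun x y hxy => ?_⟩,
    (hT.isAcyclic.anti (deleteEdges_le _)).sup_edge_of_not_reachable hac_sep⟩
  exact (Adj.reachable_induce_rewire (S := Set.univ) (x := ⟨x, trivial⟩) (y := ⟨y, trivial⟩)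
    hxy hbc hac fun _ _ => trivial).map (Embedding.induce _).toHom

end SimpleGraph

section JoinTree

variable {V ι : Type*} {E : ι → Finset V} {T : SimpleGraph ι}

lemma IsJoinTree.mem_of_mem_support (hT : IsJoinTree E T) {i j k : ι} {p : T.Walk i j}
    (hp : p.IsPath) (hk : k ∈ p.support) {v : V} (hi : v ∈ E i) (hj : v ∈ E j) : v ∈ E k :=
  hT.1.isAcyclic.isPath_support_subset (hT.2 v) hi hj hp k hk

lemma IsJoinTree.reachable_deleteEdges (hT : IsJoinTree E T) {i j k l : ι} {v : V}
    (hv : ¬(v ∈ E i ∧ v ∈ E j)) (hk : v ∈ E k) (hl : v ∈ E l) :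
    (T.deleteEdges {s(i, j)}).Reachable k l := by
  let φ : T.induce {m | v ∈ E m} →g T.deleteEdges {s(i, j)} :=
    ⟨Subtype.val, fun {x y} hxy => deleteEdges_adj.mpr ⟨hxy, fun hxy_ij => hv ?_⟩⟩
  · exact (hT.2 v ⟨k, hk⟩ ⟨l, hl⟩).map φ
  rcases Sym2.eq_iff.mp hxy_ij with ⟨rfl, rfl⟩ | ⟨rfl, rfl⟩
  · exact ⟨x.2, y.2⟩
  · exact ⟨y.2, x.2⟩

lemma IsJoinTree.exists_mem_inter_of_formsPath [DecidableEq V] (hT : IsJoinTree E T)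
    {i j : ι} (hij : T.Adj i j) {p : List V} (hp : FormsPath E p) {y z : V}
    (hy : p.head? = some y) (hz : p.getLast? = some z) (hyi : y ∈ E i) (hzj : z ∈ E j) :
    ∃ x ∈ E i ∩ E j, x ∈ p := by
  by_contra! hX
  have hX' : ∀ x ∈ p, ¬(x ∈ E i ∧ x ∈ E j) := fun x hx hxij =>
    hX x (Finset.mem_inter.mpr hxij) hx
  let D := T.deleteEdges {s(i, j)}
  have side : ∀ x ∈ p, ∃ k, x ∈ E k ∧ D.Reachable i k := by
    refine (hp.imp_of_mem_imp (S := fun a b => a ∈ p ∧ ∃ m, a ∈ E m ∧ b ∈ E m)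
      fun a _ ha _ hab => ⟨ha, hab⟩).induction _ _ ?_ ?_
    · rintro a b ⟨ha, m, ham, hbm⟩ ⟨k, hak, hik⟩
      exact ⟨m, hbm, hik.trans (hT.reachable_deleteEdges (hX' a ha) hak ham)⟩
    · intro hne
      rw [List.head?_eq_some_head hne, Option.some.injEq] at hy
      exact ⟨i, hy ▸ hyi, Reachable.refl i⟩
  have hzp : z ∈ p := List.mem_of_getLast? hz
  obtain ⟨k, hzk, hik⟩ := side z hzp
  exact hT.1.isAcyclic.not_reachable_deleteEdges hij
    (hik.trans (hT.reachable_deleteEdges (hX' z hzp) hzk hzj))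

lemma IsJoinTree.rewire [DecidableEq V] (hT : IsJoinTree E T) {a b c : ι} (hab : T.Adj a b)
    (hbc : T.Adj b c) (hac : a ≠ c) (hsub : E a ∩ E b ⊆ E c) :
    IsJoinTree E (T.rewire a b c) :=
  ⟨hT.1.rewire hab hbc hac, fun v => (hT.2 v).of_adj_reachable fun _ _ hxy =>
    hxy.reachable_induce_rewire hbc hac fun ha hb => hsub (Finset.mem_inter.mpr ⟨ha, hb⟩)⟩

lemma IsJoinTree.inter_nonempty_of_adj [DecidableEq V] (hconn : (incidenceGraph E).Connected)
    (hT : IsJoinTree E T) {i j : ι} (hij : T.Adj i j) : (E i ∩ E j).Nonempty := by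
  by_contra hX
  have hX' : ∀ v, ¬(v ∈ E i ∧ v ∈ E j) := fun v hv =>
    hX ⟨v, Finset.mem_inter.mpr hv⟩
  let D := T.deleteEdges {s(i, j)}
  let side : V ⊕ ι → Prop := Sum.elim (fun v => ∃ k, v ∈ E k ∧ D.Reachable i k) (D.Reachable i)
  have side_closed : ∀ x y, (incidenceGraph E).Adj x y → side x → side y := by
    rintro x y (⟨v, k, rfl, rfl, hvk⟩ | ⟨v, k, rfl, rfl, hvk⟩) hx
    · obtain ⟨l, hvl, hil⟩ := hx
      exact hil.trans (hT.reachable_deleteEdges (hX' v) hvl hvk)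
    · exact ⟨k, hvk, hx⟩
  have side_all : ∀ x, side x := fun x => by
    induction (reachable_iff_reflTransGen _ _).mp (hconn (.inr i) x) with
    | refl => exact Reachable.refl i
    | tail _ hadj ih => exact side_closed _ _ hadj ih
  exact hT.1.isAcyclic.not_reachable_deleteEdges hij (side_all (.inr j))

end JoinTree

section GammaAcyclic

variable {V ι : Type*} [DecidableEq V] {E : ι → Finset V}

lemma GammaAcyclic.inter_subset_or (hga : GammaAcyclic E) {i k : ι} (hik : i ≠ k)
    (hne : (E i ∩ E k).Nonempty) (m : ι) : E i ∩ E m ⊆ E k ∨ E k ∩ E m ⊆ E i := by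
  by_contra! h
  obtain ⟨⟨a, ha, hak⟩, b, hb, hbi⟩ := h.imp Finset.not_subset.mp Finset.not_subset.mp
  have hab : FormsPath E [a, b] :=
    List.isChain_pair.mpr ⟨m, (Finset.mem_inter.mp ha).2, (Finset.mem_inter.mp hb).2⟩
  obtain ⟨x, hx, hxab⟩ := (hga i k hik hne).2 [a, b] hab
    ⟨a, Finset.mem_sdiff.mpr ⟨(Finset.mem_inter.mp ha).1, hak⟩, rfl⟩
    ⟨b, Finset.mem_sdiff.mpr ⟨(Finset.mem_inter.mp hb).1, hbi⟩, rfl⟩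
  rcases List.mem_pair.mp hxab with rfl | rfl
  · exact hak (Finset.mem_inter.mp hx).2
  · exact hbi (Finset.mem_inter.mp hx).1

lemma GammaAcyclic.exists_shorter_path (hga : GammaAcyclic E) {T : SimpleGraph ι}
    (hT : IsJoinTree E T) {i j p₁ p₂ : ι} (hX : (E i ∩ E j).Nonempty) (h₁ : T.Adj i p₁)
    (h₂ : T.Adj p₁ p₂) (q : T.Walk p₂ j) (hp : (Walk.cons h₁ (Walk.cons h₂ q)).IsPath) :
    ∃ T', IsJoinTree E T' ∧ ∃ p : T'.Walk i j, p.IsPath ∧ p.length = q.length + 1 := by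
  obtain ⟨⟨hq, hp₁q⟩, hip⟩ := (Walk.cons_isPath_iff _ _).mp hp |>.imp_left
    (Walk.cons_isPath_iff _ _).mp
  have hiq : i ∉ q.support := fun h => hip (List.mem_cons_of_mem _ h)
  have hip₂ : i ≠ p₂ := fun h => hiq (h ▸ q.start_mem_support)
  have hX₂ : (E i ∩ E p₂).Nonempty := hX.mono fun v hv =>
    Finset.mem_inter.mpr ⟨(Finset.mem_inter.mp hv).1, hT.mem_of_mem_support hp (by simp)
      (Finset.mem_inter.mp hv).1 (Finset.mem_inter.mp hv).2⟩
  have extend : ∀ (G : SimpleGraph ι) (e : Sym2 ι), T.deleteEdges {e} ≤ G → e ∉ q.edges →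
      G.Adj i p₂ → ∃ p : G.Walk i j, p.IsPath ∧ p.length = q.length + 1 :=
    fun G e hle he hadj => ⟨.cons hadj ((q.toDeleteEdge e he).mapLe hle),
      ((hq.toDeleteEdges _ _ _).mapLe hle).cons (by simpa using hiq), by simp⟩
  rcases hga.inter_subset_or hip₂ hX₂ p₁ with hsub | hsub
  · exact ⟨_, hT.rewire h₁ h₂ hip₂ hsub, extend _ _ le_sup_left
      (fun he => hiq (q.fst_mem_support_of_mem_edges he)) (rewire_adj hip₂)⟩
  · exact ⟨_, hT.rewire h₂.symm h₁.symm hip₂.symm hsub, extend _ _ le_sup_left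
      (fun he => hp₁q (q.snd_mem_support_of_mem_edges he)) (rewire_adj hip₂.symm).symm⟩

lemma GammaAcyclic.exists_isJoinTree_adj (hga : GammaAcyclic E) {i j : ι}
    (hX : (E i ∩ E j).Nonempty) (n : ℕ) :
    ∀ T : SimpleGraph ι, IsJoinTree E T → ∀ p : T.Walk i j, p.IsPath → p.length = n + 1 →
      ∃ T', IsJoinTree E T' ∧ T'.Adj i j := by
  induction n with
  | zero =>
    rintro T hT (_ | ⟨h, _ | _⟩) - hlen
    · simp at hlen
    · exact ⟨T, hT, h⟩
    · simp at hlen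
  | succ n ih =>
    rintro T hT (_ | ⟨h₁, _ | ⟨h₂, q⟩⟩) hp hlen
    · simp at hlen
    · exact ⟨T, hT, h₁⟩
    · obtain ⟨T', hT', p, hp', hlen'⟩ := hga.exists_shorter_path hT hX h₁ h₂ q hp
      exact ih T' hT' p hp' (by simp at hlen; omega)

end GammaAcyclic

theorem stmt12_general {V ι : Type*} [DecidableEq V]
    (E : ι → Finset V)
    (hconn : (incidenceGraph E).Connected)
    (hacyclic : IsAcyclicHG E) :
    GammaAcyclic E ↔
      ∀ i j : ι, i ≠ j →
        ((E i ∩ E j).Nonempty ↔ ∃ T : SimpleGraph ι, IsJoinTree E T ∧ T.Adj i j) := by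
  constructor
  · intro hga i j hij
    refine ⟨fun hX => ?_, fun ⟨T, hT, hadj⟩ => hT.inter_nonempty_of_adj hconn hadj⟩
    obtain ⟨T, hT⟩ := hacyclic
    obtain ⟨p, hp⟩ := hT.1.connected.preconnected.exists_isPath i j
    have hlen : p.length ≠ 0 := fun h => hij (Walk.eq_of_length_eq_zero h)
    exact hga.exists_isJoinTree_adj hX _ T hT p hp (Nat.succ_pred_eq_of_ne_zero hlen).symm
  · intro h i j hij hX
    obtain ⟨T, hT, hadj⟩ := (h i j hij).mp hX
    refine ⟨hX, fun p hp ⟨y, hy, hhead⟩ ⟨z, hz, hlast⟩ => ?_⟩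
    exact hT.exists_mem_inter_of_formsPath hadj hp hhead hlast (Finset.mem_sdiff.mp hy).1
      (Finset.mem_sdiff.mp hz).1

/-- An acyclic hypergraph `H` (with connected incidence graph, as
assumed throughout the paper) is γ-acyclic iff its line graph is isomorphic, under the
identity on hyperedges, to its union join graph, i.e. iff for all distinct hyperedges
`E_i, E_j`: `E_i ∩ E_j ≠ ∅` holds exactly when some join tree of `H` contains the edge
`E_iE_j`. -/
theorem stmt12 {V ι : Type*} [Fintype V] [Fintype ι] [DecidableEq V]
    (E : ι → Finset V)
    (hne : ∀ i, (E i).Nonempty) (hcov : ∀ v, ∃ i, v ∈ E i)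
    (hconn : (incidenceGraph E).Connected)
    (hacyclic : IsAcyclicHG E) :
    GammaAcyclic E ↔
      ∀ i j : ι, i ≠ j →
        ((E i ∩ E j).Nonempty ↔ ∃ T : SimpleGraph ι, IsJoinTree E T ∧ T.Adj i j) :=
  stmt12_general E hconn hacyclic
end
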